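/- Let A be a unital complex Banach algebra (a complete normed ring that is a normed ℂ-algebra) and x ∈ A with x·x = 4·1. Then for every ξ ∈ ℂ, exp(πi(ξ+1)) • exp((πi(ξ+1)/2) • x) = exp(πiξ) • exp((πiξ/2) • x), where the outer exp is the complex exponential acting by scalar multiplication and the inner exp is the exponential defined by the convergent power series in A. -/

import Mathlib

/-!
Put `y = x / 2`, so `y * y = 1`. Splitting the exponential series into even and odd powers gives
`exp (c • y) = cosh c + sinh c • y`, and since `cosh` and `sinh` both change sign under
`c ↦ c + π i`, so does `exp (c • y)`. The scalar factor `exp (π i ξ)` changes sign too, and the two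
signs cancel.
-/

open Complex Real

namespace NormedSpace

variable {A : Type*} [NormedRing A] [NormedAlgebra ℂ A]

theorem exp_smul_of_mul_self_eq_one {y : A} (hy : y * y = 1) (c : ℂ) :
    exp (c • y) = cosh c • (1 : A) + sinh c • y := by
  have hy_even : ∀ k : ℕ, y ^ (2 * k) = 1 := fun k => by rw [pow_mul, sq, hy, one_pow]
  rw [exp_eq_tsum ℂ]
  refine HasSum.tsum_eq (HasSum.even_add_odd ?_ ?_)
  · convert (hasSum_cosh c).smul_const (1 : A) using 2 with k
    rw [smul_pow, hy_even, smul_smul, inv_mul_eq_div]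
  · convert (hasSum_sinh c).smul_const y using 2 with k
    rw [smul_pow, pow_succ y, hy_even, one_mul, smul_smul, inv_mul_eq_div]

theorem exp_add_pi_mul_I_smul_of_mul_self_eq_one {y : A} (hy : y * y = 1) (c : ℂ) :
    exp ((c + π * I) • y) = -exp (c • y) := by
  rw [exp_smul_of_mul_self_eq_one hy, exp_smul_of_mul_self_eq_one hy, cosh_add_pi_mul_I,
    sinh_add_pi_mul_I, neg_smul, neg_smul, neg_add]

end NormedSpace

open NormedSpace in
theorem stmt_6_general {A : Type*} [NormedRing A] [NormedAlgebra ℂ A]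
    (x : A) (hx : x * x = 4 • (1 : A)) :
    ∀ ξ : ℂ,
      Complex.exp ((Real.pi : ℂ) * Complex.I * (ξ + 1)) •
          NormedSpace.exp (((Real.pi : ℂ) * Complex.I * (ξ + 1) / 2) • x)
        = Complex.exp ((Real.pi : ℂ) * Complex.I * ξ) •
            NormedSpace.exp (((Real.pi : ℂ) * Complex.I * ξ / 2) • x) := by
  intro ξ
  set y : A := (2 : ℂ)⁻¹ • x
  have hy : y * y = 1 := by
    rw [smul_mul_smul_comm, hx, ← Nat.cast_smul_eq_nsmul ℂ, smul_smul]
    norm_num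
  have half_smul : ∀ c : ℂ, (c / 2) • x = c • y := fun c => by rw [smul_smul, div_eq_mul_inv]
  have shift : (π : ℂ) * I * (ξ + 1) = π * I * ξ + π * I := by ring
  rw [half_smul, half_smul, shift, exp_add_pi_mul_I_smul_of_mul_self_eq_one hy, exp_add_pi_mul_I,
    neg_smul_neg]

/-- If `x * x = 4` in a unital complex Banach algebra, then the map
`ξ ↦ exp (π i ξ) • exp ((π i ξ / 2) • x)` is invariant under `ξ ↦ ξ + 1`. -/
theorem stmt_6 {A : Type*} [NormedRing A] [NormedAlgebra ℂ A] [CompleteSpace A]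
    (x : A) (hx : x * x = 4 • (1 : A)) :
    ∀ ξ : ℂ,
      Complex.exp ((Real.pi : ℂ) * Complex.I * (ξ + 1)) •
          NormedSpace.exp (((Real.pi : ℂ) * Complex.I * (ξ + 1) / 2) • x)
        = Complex.exp ((Real.pi : ℂ) * Complex.I * ξ) •
            NormedSpace.exp (((Real.pi : ℂ) * Complex.I * ξ / 2) • x) :=
  stmt_6_general x hx
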